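/- arXiv:1809.08782 — 4 statements merged into one kernel-verified Lean document; each statement's English description precedes it below -/
import Mathlib

section
/- Let d be a positive integer, m a positive integer, U > 0 a real number, x ∈ ℝ^d, and q ∈ ℝ^d with ‖q‖ = 1. Define P(x) ∈ ℝ^{d+m} as the concatenation of Ux with the m scalars ‖Ux‖^{2^1}, ‖Ux‖^{2^2}, …, ‖Ux‖^{2^m}, and Q(q) ∈ ℝ^{d+m} as the concatenation of q with m copies of the scalar 1/2. Then ‖P(x) − Q(q)‖² = 1 + m/4 − 2U⟨x, q⟩ + ‖Ux‖^{2^{m+1}}. -/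
/-!
The squared distance splits over the two blocks of coordinates. On the first block,
`‖Ux - q‖² = ‖Ux‖² - 2U⟨x, q⟩ + 1` since `‖q‖ = 1`. On the second, with `t = ‖Ux‖^{2^k}`
each term is `(t - 1/2)² = t² - t + 1/4` and `t² = ‖Ux‖^{2^{k+1}}`, so the sum telescopes to
`‖Ux‖^{2^{m+1}} - ‖Ux‖² + m/4`; the `‖Ux‖²` cancels against the first block.
-/

open Finset

theorem EuclideanSpace.norm_sq_append {𝕜 : Type*} [RCLike 𝕜] {d m : ℕ}
    (u : EuclideanSpace 𝕜 (Fin d)) (v : EuclideanSpace 𝕜 (Fin m)) :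
    ‖(WithLp.toLp 2 (Fin.append ⇑u ⇑v) : EuclideanSpace 𝕜 (Fin (d + m)))‖ ^ 2
      = ‖u‖ ^ 2 + ‖v‖ ^ 2 := by
  simp only [EuclideanSpace.norm_sq_eq, Fin.sum_univ_add, Fin.append_left, Fin.append_right]

theorem Fin.append_sub_append {α : Type*} [Sub α] {d m : ℕ}
    (u u' : Fin d → α) (v v' : Fin m → α) :
    Fin.append u v - Fin.append u' v' = Fin.append (u - u') (v - v') := by
  ext i
  refine Fin.addCases (fun i => ?_) (fun k => ?_) i <;> simp

theorem sum_range_sq_pow_two_pow_sub_half (a : ℝ) (m : ℕ) :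
    ∑ k ∈ range m, (a ^ 2 ^ (k + 1) - 1 / 2) ^ 2 = a ^ 2 ^ (m + 1) - a ^ 2 + m / 4 := by
  have hterm (k : ℕ) : (a ^ 2 ^ (k + 1) - 1 / 2) ^ 2
      = (a ^ 2 ^ (k + 2) - a ^ 2 ^ (k + 1)) + 1 / 4 := by
    rw [pow_succ 2 (k + 1), pow_mul]
    ring
  simp only [hterm, sum_add_distrib, sum_range_sub (fun k => a ^ 2 ^ (k + 1)), sum_const,
    card_range, zero_add, pow_one, nsmul_eq_mul]
  ring

theorem l2_alsh_transform_general (d m : ℕ) (U : ℝ)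
    (x q : EuclideanSpace ℝ (Fin d)) (hq : ‖q‖ = 1)
    (P : EuclideanSpace ℝ (Fin (d + m)))
    (hP : P = Fin.append ((U • x : EuclideanSpace ℝ (Fin d)) : Fin d → ℝ)
      (fun k : Fin m => ‖U • x‖ ^ (2 ^ ((k : ℕ) + 1))))
    (Q : EuclideanSpace ℝ (Fin (d + m)))
    (hQ : Q = Fin.append ((q : EuclideanSpace ℝ (Fin d)) : Fin d → ℝ)
      (fun _ : Fin m => (1 / 2 : ℝ))) :
    ‖P - Q‖ ^ 2 = 1 + (m : ℝ) / 4 - 2 * U * (inner ℝ x q : ℝ) + ‖U • x‖ ^ (2 ^ (m + 1)) := by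
  set a := ‖U • x‖
  set tail : EuclideanSpace ℝ (Fin m) := WithLp.toLp 2 fun k => a ^ 2 ^ ((k : ℕ) + 1) - 1 / 2
  have hPQ : P - Q = WithLp.toLp 2 (Fin.append ⇑(U • x - q) ⇑tail) := by
    ext1
    rw [WithLp.ofLp_sub, hP, hQ, Fin.append_sub_append]
    rfl
  have hhead : ‖U • x - q‖ ^ 2 = a ^ 2 - 2 * U * inner ℝ x q + 1 := by
    rw [norm_sub_sq_real, real_inner_smul_left, hq]
    ring
  have htail : ‖tail‖ ^ 2 = a ^ 2 ^ (m + 1) - a ^ 2 + m / 4 := by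
    simp only [tail, EuclideanSpace.norm_sq_eq, Real.norm_eq_abs, sq_abs]
    rw [Fin.sum_univ_eq_sum_range (fun k => (a ^ 2 ^ (k + 1) - 1 / 2) ^ 2),
      sum_range_sq_pow_two_pow_sub_half]
  rw [hPQ, EuclideanSpace.norm_sq_append, hhead, htail]
  ring

/-- L2-ALSH asymmetric transformation: with `P(x) = [Ux; ‖Ux‖^2; …; ‖Ux‖^{2^m}]` and
`Q(q) = [q; 1/2; …; 1/2]`, one has `‖P(x) - Q(q)‖² = 1 + m/4 - 2U⟨x,q⟩ + ‖Ux‖^{2^{m+1}}`. -/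
theorem l2_alsh_transform (d m : ℕ) (hd : 0 < d) (hm : 0 < m) (U : ℝ) (hU : 0 < U)
    (x q : EuclideanSpace ℝ (Fin d)) (hq : ‖q‖ = 1)
    (P : EuclideanSpace ℝ (Fin (d + m)))
    (hP : P = Fin.append ((U • x : EuclideanSpace ℝ (Fin d)) : Fin d → ℝ)
      (fun k : Fin m => ‖U • x‖ ^ (2 ^ ((k : ℕ) + 1))))
    (Q : EuclideanSpace ℝ (Fin (d + m)))
    (hQ : Q = Fin.append ((q : EuclideanSpace ℝ (Fin d)) : Fin d → ℝ)
      (fun _ : Fin m => (1 / 2 : ℝ))) :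
    ‖P - Q‖ ^ 2 = 1 + (m : ℝ) / 4 - 2 * U * (inner ℝ x q : ℝ) + ‖U • x‖ ^ (2 ^ (m + 1)) :=
  l2_alsh_transform_general d m U x q hq P hP Q hQ
end

section
/- Fix a real number c with 0 < c < 1. The function S ↦ G(c, S) = log(1 − arccos(S)/π) / log(1 − arccos(cS)/π) is strictly decreasing on the interval (0, 1): for all 0 < S₁ < S₂ < 1, G(c, S₂) < G(c, S₁). -/
/-- The SIMPLE-LSH query-time exponent `ρ = G(c, S)`. -/
noncomputable def G (c S : ℝ) : ℝ :=
  Real.log (1 - Real.arccos S / Real.pi) / Real.log (1 - Real.arccos (c * S) / Real.pi)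

open Real Set

/-! With `h x = -log (1 - arccos x / π) > 0` we have `G c S = h S / h (c S)`. A ratio
`f S / f (c S)` with `0 < c < 1` is strictly decreasing as soon as the elasticity
`x f'(x) / f(x)` is strictly decreasing, because the derivative of its logarithm is the
difference of the elasticities at `S` and `c S`, divided by `S`. For `h` the elasticity is
`-(x / √(1 - x²)) / (π · negMulLog p(x))` with `p x = 1 - arccos x / π ∈ (1/2, 1)`: the
numerator increases in `x`, and the denominator decreases since `p` increases and `negMulLog`
decreases on `[e⁻¹, ∞)`. -/

theorem strictAntiOn_div_comp_const_mul {f f' : ℝ → ℝ} {b c : ℝ} (hc0 : 0 < c) (hc1 : c < 1)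
    (hf : ∀ x ∈ Ioo 0 b, 0 < f x) (hf' : ∀ x ∈ Ioo 0 b, HasDerivAt f (f' x) x)
    (he : StrictAntiOn (fun x => x * f' x / f x) (Ioo 0 b)) :
    StrictAntiOn (fun x => f x / f (c * x)) (Ioo 0 b) := by
  have hcx_lt : ∀ x ∈ Ioo 0 b, c * x < x := fun x hx => by nlinarith [hx.1]
  have hcx : ∀ x ∈ Ioo 0 b, c * x ∈ Ioo 0 b := fun x hx =>
    ⟨mul_pos hc0 hx.1, (hcx_lt x hx).trans hx.2⟩
  set Φ := fun x => log (f x) - log (f (c * x))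
  have hΦ : ∀ x ∈ Ioo 0 b,
      HasDerivAt Φ ((x * f' x / f x - c * x * f' (c * x) / f (c * x)) / x) x := by
    intro x hx
    have h₁ := (hf' x hx).log (hf x hx).ne'
    have h₂ : HasDerivAt (fun x => log (f (c * x))) (f' (c * x) / f (c * x) * c) x := by
      have hlin : HasDerivAt (fun y => c * y) c x := by simpa using (hasDerivAt_id x).const_mul c
      exact ((hf' _ (hcx x hx)).log (hf _ (hcx x hx)).ne').comp x hlin
    refine (h₁.sub h₂).congr_deriv ?_
    field_simp [hx.1.ne']
  have hΦ_anti : StrictAntiOn Φ (Ioo 0 b) := by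
    refine strictAntiOn_of_deriv_neg (convex_Ioo 0 b)
      (fun x hx => (hΦ x hx).continuousAt.continuousWithinAt) fun x hx => ?_
    rw [interior_Ioo] at hx
    rw [(hΦ x hx).deriv]
    exact div_neg_of_neg_of_pos (sub_neg.2 (he (hcx x hx) hx (hcx_lt x hx))) hx.1
  have hexp : ∀ x ∈ Ioo 0 b, f x / f (c * x) = exp (Φ x) := fun x hx => by
    simp only [Φ, exp_sub, exp_log (hf x hx), exp_log (hf _ (hcx x hx))]
  intro x hx y hy hxy
  simp only [hexp x hx, hexp y hy]
  exact exp_lt_exp.2 (hΦ_anti hx hy hxy)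

theorem Real.strictAntiOn_negMulLog : StrictAntiOn negMulLog (Ici (exp (-1))) := by
  refine strictAntiOn_of_deriv_neg (convex_Ici _) continuous_negMulLog.continuousOn fun x hx => ?_
  rw [interior_Ici] at hx
  have hx0 : 0 < x := (exp_pos _).trans hx
  have hlog : -1 < log x := (lt_log_iff_exp_lt hx0).2 hx
  rw [deriv_negMulLog hx0.ne']
  linarith

theorem Real.negMulLog_pos {x : ℝ} (h0 : 0 < x) (h1 : x < 1) : 0 < negMulLog x := by
  rw [negMulLog_eq_neg]
  exact neg_pos.2 (mul_log_neg h0 h1)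

theorem strictMonoOn_div_sqrt_one_sub_sq :
    StrictMonoOn (fun x : ℝ => x / √(1 - x ^ 2)) (Ico 0 1) := by
  intro x hx y hy hxy
  have hsqrt : √(1 - y ^ 2) < √(1 - x ^ 2) :=
    sqrt_lt_sqrt (by nlinarith [hy.2, hx.1, hxy]) (by nlinarith [hx.1])
  exact div_lt_div₀' hxy.le hsqrt (hx.1.trans_lt hxy) (sqrt_pos.2 (by nlinarith [hy.2, hx.1]))

/-- The probability that a uniformly random hyperplane through the origin does not separate two
unit vectors with inner product `x`. -/
noncomputable def collisionProb (x : ℝ) : ℝ := 1 - arccos x / π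

theorem strictMonoOn_collisionProb : StrictMonoOn collisionProb (Icc (-1) 1) :=
  fun _ hx _ hy hxy => by
    have := div_lt_div_of_pos_right (strictAntiOn_arccos hx hy hxy) pi_pos
    simp only [collisionProb]
    linarith

theorem collisionProb_mem_Ioo {x : ℝ} (hx : x ∈ Ioo 0 1) :
    collisionProb x ∈ Ioo (1 / 2) 1 := by
  have hpos : 0 < arccos x / π := div_pos (arccos_pos.2 hx.2) pi_pos
  have hlt : arccos x / π < 1 / 2 := by
    rw [div_lt_iff₀ pi_pos]
    linarith [arccos_lt_pi_div_two.2 hx.1]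
  constructor <;> simp only [collisionProb] <;> linarith

theorem hasDerivAt_collisionProb {x : ℝ} (h₁ : x ≠ -1) (h₂ : x ≠ 1) :
    HasDerivAt collisionProb (1 / (π * √(1 - x ^ 2))) x := by
  refine (((hasDerivAt_arccos h₁ h₂).div_const π).const_sub 1).congr_deriv ?_
  field_simp

theorem neg_log_collisionProb_pos {x : ℝ} (hx : x ∈ Ioo 0 1) : 0 < -log (collisionProb x) := by
  have hp := collisionProb_mem_Ioo hx
  exact neg_pos.2 (log_neg (by linarith [hp.1]) hp.2)

theorem hasDerivAt_neg_log_collisionProb {x : ℝ} (hx : x ∈ Ioo 0 1) :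
    HasDerivAt (fun x => -log (collisionProb x))
      (-(1 / (π * √(1 - x ^ 2)) / collisionProb x)) x := by
  have hp := collisionProb_mem_Ioo hx
  exact ((hasDerivAt_collisionProb (by linarith [hx.1]) hx.2.ne).log
    (by linarith [hp.1])).neg

theorem elasticity_neg_log_collisionProb {x : ℝ} (hx : x ∈ Ioo 0 1) :
    x * -(1 / (π * √(1 - x ^ 2)) / collisionProb x) / -log (collisionProb x) =
      -((x / √(1 - x ^ 2)) / (π * negMulLog (collisionProb x))) := by
  have hp := collisionProb_mem_Ioo hx
  have hs : 0 < √(1 - x ^ 2) := sqrt_pos.2 (by nlinarith [hx.1, hx.2])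
  have hlog : log (collisionProb x) ≠ 0 := (log_neg (by linarith [hp.1]) hp.2).ne
  have hp0 : collisionProb x ≠ 0 := by linarith [hp.1]
  rw [negMulLog]
  field_simp

theorem strictAntiOn_elasticity_neg_log_collisionProb :
    StrictAntiOn (fun x => x * -(1 / (π * √(1 - x ^ 2)) / collisionProb x) /
      -log (collisionProb x)) (Ioo 0 1) := by
  intro x hx y hy hxy
  have hpx := collisionProb_mem_Ioo hx
  have hpy := collisionProb_mem_Ioo hy
  have hexp : exp (-1) ≤ 1 / 2 := by
    rw [exp_neg, one_div]
    exact inv_anti₀ two_pos (by linarith [add_one_le_exp 1])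
  have hnml : negMulLog (collisionProb y) < negMulLog (collisionProb x) :=
    strictAntiOn_negMulLog (mem_Ici.2 (hexp.trans hpx.1.le)) (mem_Ici.2 (hexp.trans hpy.1.le))
      (strictMonoOn_collisionProb (Ioo_subset_Icc_self (Ioo_subset_Ioo_left (by norm_num) hx))
        (Ioo_subset_Icc_self (Ioo_subset_Ioo_left (by norm_num) hy)) hxy)
  simp only [elasticity_neg_log_collisionProb hx, elasticity_neg_log_collisionProb hy,
    neg_lt_neg_iff]
  exact div_lt_div₀' (strictMonoOn_div_sqrt_one_sub_sq (Ioo_subset_Ico_self hx)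
      (Ioo_subset_Ico_self hy) hxy).le (mul_lt_mul_of_pos_left hnml pi_pos)
    (div_pos hy.1 (sqrt_pos.2 (by nlinarith [hy.1, hy.2])))
    (mul_pos pi_pos (negMulLog_pos (by linarith [hpy.1]) hpy.2))

/-- For fixed `0 < c < 1`, the exponent `S ↦ G(c, S)` is strictly decreasing on `(0, 1)`. -/
theorem G_strictAnti (c : ℝ) (hc0 : 0 < c) (hc1 : c < 1) :
    ∀ S₁ S₂ : ℝ, 0 < S₁ → S₁ < S₂ → S₂ < 1 → G c S₂ < G c S₁ := by
  intro S₁ S₂ h₁ h₁₂ h₂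
  have hratio := strictAntiOn_div_comp_const_mul hc0 hc1 (fun x hx => neg_log_collisionProb_pos hx)
    (fun x hx => hasDerivAt_neg_log_collisionProb hx) strictAntiOn_elasticity_neg_log_collisionProb
  simpa only [G, collisionProb, neg_div_neg_eq] using
    hratio ⟨h₁, h₁₂.trans h₂⟩ ⟨h₁.trans h₁₂, h₂⟩ h₁₂
end

section
/- (Theorem 1, analytic form.) Let ρ, ρ*, α, β be real numbers with 0 < ρ* < ρ < 1, 0 < α < min{ρ, (ρ − ρ*)/(1 − ρ*)}, and 0 < β < αρ. For each integer n ≥ 2, let J_n be a finite index set with |J_n| ≤ n^α and let (ρ_j^{(n)})_{j∈J_n} be real numbers with 0 ≤ ρ_j^{(n)} ≤ ρ for all j, such that the number of indices j ∈ J_n with ρ_j^{(n)} > ρ* is at most n^β. Define f(n) = n^α + (∑_{j∈J_n} n^{(1−α)ρ_j^{(n)}})·log n. Then f(n)/(n^ρ log n) → 0 as n → ∞. -/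
/-!
Split the sum at the threshold `ρ*`: at most `n^β` terms are at most `n^{(1-α)ρ}`, and at most
`n^α` terms are at most `n^{(1-α)ρ*}`. After dividing by `n^ρ log n` the ratio is bounded by
`n^{α-ρ} / log n + n^{β-αρ} + n^{α+(1-α)ρ*-ρ}`, and the hypotheses on `α` and `β` make every
exponent negative.
-/

open Filter Finset

lemma tendsto_natCast_rpow_nhds_zero {c : ℝ} (hc : c < 0) :
    Tendsto (fun n : ℕ => (n : ℝ) ^ c) atTop (nhds 0) := by
  simpa [Function.comp_def] using
    (tendsto_rpow_neg_atTop (neg_pos.2 hc)).comp tendsto_natCast_atTop_atTop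

lemma Finset.sum_le_card_filter_mul_add_card_mul {ι : Type*} (s : Finset ι) (p : ι → Prop)
    [DecidablePred p] {u : ι → ℝ} {A B : ℝ} (hA : 0 ≤ A)
    (hB : ∀ j ∈ s, p j → u j ≤ B) (hA' : ∀ j ∈ s, ¬ p j → u j ≤ A) :
    ∑ j ∈ s, u j ≤ #(s.filter p) * B + #s * A := by
  rw [← sum_filter_add_sum_filter_not s p]
  gcongr
  · simpa using sum_le_card_nsmul _ _ B fun j hj => hB j (mem_filter.1 hj).1 (mem_filter.1 hj).2
  · calc ∑ j ∈ s.filter (¬ p ·), u j ≤ #(s.filter (¬ p ·)) * A := by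
          simpa using sum_le_card_nsmul _ _ A fun j hj =>
            hA' j (mem_filter.1 hj).1 (mem_filter.1 hj).2
      _ ≤ #s * A := by gcongr; exact filter_subset _ _

lemma sum_rpow_mul_le_of_card_le {ι : Type*} {x c t r α β : ℝ} (hx : 1 ≤ x) (hc : 0 ≤ c)
    (s : Finset ι) (e : ι → ℝ) (he : ∀ j ∈ s, e j ≤ r) (hs : (#s : ℝ) ≤ x ^ α)
    (hbig : (#(s.filter (t < e ·)) : ℝ) ≤ x ^ β) :
    ∑ j ∈ s, x ^ (c * e j) ≤ x ^ (β + c * r) + x ^ (α + c * t) := by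
  have hx0 : 0 < x := one_pos.trans_le hx
  calc ∑ j ∈ s, x ^ (c * e j)
      ≤ #(s.filter (t < e ·)) * x ^ (c * r) + #s * x ^ (c * t) :=
        s.sum_le_card_filter_mul_add_card_mul _ (by positivity)
          (fun j hj _ => Real.rpow_le_rpow_of_exponent_le hx
            (mul_le_mul_of_nonneg_left (he j hj) hc))
          (fun j _ hj => Real.rpow_le_rpow_of_exponent_le hx
            (mul_le_mul_of_nonneg_left (not_lt.1 hj) hc))
    _ ≤ x ^ β * x ^ (c * r) + x ^ α * x ^ (c * t) := by gcongr
    _ = x ^ (β + c * r) + x ^ (α + c * t) := by rw [Real.rpow_add hx0, Real.rpow_add hx0]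

lemma sum_rpow_mul_div_rpow_le_of_card_le {ι : Type*} {x t ρ α β : ℝ} (hx : 1 ≤ x) (hα : α ≤ 1)
    (s : Finset ι) (e : ι → ℝ) (he : ∀ j ∈ s, e j ≤ ρ) (hs : (#s : ℝ) ≤ x ^ α)
    (hbig : (#(s.filter (t < e ·)) : ℝ) ≤ x ^ β) :
    (∑ j ∈ s, x ^ ((1 - α) * e j)) / x ^ ρ ≤ x ^ (β - α * ρ) + x ^ (α + (1 - α) * t - ρ) := by
  have hx0 : 0 < x := one_pos.trans_le hx
  calc (∑ j ∈ s, x ^ ((1 - α) * e j)) / x ^ ρ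
      ≤ (x ^ (β + (1 - α) * ρ) + x ^ (α + (1 - α) * t)) / x ^ ρ := by
        gcongr
        exact sum_rpow_mul_le_of_card_le hx (by linarith) s e he hs hbig
    _ = x ^ (β - α * ρ) + x ^ (α + (1 - α) * t - ρ) := by
        rw [add_div, ← Real.rpow_sub hx0, ← Real.rpow_sub hx0]
        ring_nf

theorem rangeLSH_beats_simpleLSH_general {ι : Type*} (ρ ρstar α β : ℝ)
    (hρstarρ : ρstar < ρ) (hρ1 : ρ < 1)
    (hαρ : α < ρ) (hαρstar : α < (ρ - ρstar) / (1 - ρstar))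
    (hβ : β < α * ρ)
    (J : ℕ → Finset ι) (g : ℕ → ι → ℝ)
    (hcard : ∀ n : ℕ, 2 ≤ n → ((J n).card : ℝ) ≤ (n : ℝ) ^ α)
    (hgρ : ∀ n : ℕ, 2 ≤ n → ∀ j ∈ J n, g n j ≤ ρ)
    (hbig : ∀ n : ℕ, 2 ≤ n →
      (((J n).filter (fun j => ρstar < g n j)).card : ℝ) ≤ (n : ℝ) ^ β)
    (f : ℕ → ℝ)
    (hf : ∀ n : ℕ, 2 ≤ n →
      f n = (n : ℝ) ^ α + (∑ j ∈ J n, (n : ℝ) ^ ((1 - α) * g n j)) * Real.log n) :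
    Tendsto (fun n : ℕ => f n / ((n : ℝ) ^ ρ * Real.log n)) atTop (nhds 0) := by
  have hsmall : α + (1 - α) * ρstar - ρ < 0 := by
    have := (lt_div_iff₀ (by linarith : 0 < 1 - ρstar)).1 hαρstar
    linarith
  set S : ℕ → ℝ := fun n => ∑ j ∈ J n, (n : ℝ) ^ ((1 - α) * g n j)
  have hsplit : ∀ᶠ n : ℕ in atTop,
      (n : ℝ) ^ (α - ρ) / Real.log n + S n / (n : ℝ) ^ ρ = f n / ((n : ℝ) ^ ρ * Real.log n) := by
    filter_upwards [eventually_ge_atTop 2] with n hn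
    have hn0 : (0 : ℝ) < n := by positivity
    have hlog : Real.log n ≠ 0 := (Real.log_pos (by exact_mod_cast hn)).ne'
    rw [hf n hn, Real.rpow_sub hn0]
    field_simp
    rfl
  have hS : ∀ᶠ n : ℕ in atTop, 0 ≤ S n / (n : ℝ) ^ ρ ∧
      S n / (n : ℝ) ^ ρ ≤ (n : ℝ) ^ (β - α * ρ) + (n : ℝ) ^ (α + (1 - α) * ρstar - ρ) := by
    filter_upwards [eventually_ge_atTop 2] with n hn
    have hn1 : (1 : ℝ) ≤ n := by exact_mod_cast one_le_two.trans hn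
    exact ⟨by positivity, sum_rpow_mul_div_rpow_le_of_card_le hn1 (by linarith) _ _ (hgρ n hn)
      (hcard n hn) (hbig n hn)⟩
  have hfirst : Tendsto (fun n : ℕ => (n : ℝ) ^ (α - ρ) / Real.log n) atTop (nhds 0) :=
    (tendsto_natCast_rpow_nhds_zero (by linarith)).div_atTop
      (Real.tendsto_log_atTop.comp tendsto_natCast_atTop_atTop)
  have hsecond : Tendsto (fun n => S n / (n : ℝ) ^ ρ) atTop (nhds 0) := by
    refine squeeze_zero' (hS.mono fun _ h => h.1) (hS.mono fun _ h => h.2) ?_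
    simpa using (tendsto_natCast_rpow_nhds_zero (by linarith)).add
      (tendsto_natCast_rpow_nhds_zero hsmall)
  simpa using (hfirst.add hsecond).congr' hsplit

/-- Theorem 1 of norm-ranging LSH, analytic form: the total query cost
`f(n) = n^α + (∑_{j ∈ J_n} n^{(1-α)ρ_j}) log n` of norm-ranging LSH is asymptotically
negligible with respect to the SIMPLE-LSH query cost `n^ρ log n`. -/
theorem rangeLSH_beats_simpleLSH {ι : Type*} (ρ ρstar α β : ℝ)
    (hρstar0 : 0 < ρstar) (hρstarρ : ρstar < ρ) (hρ1 : ρ < 1)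
    (hα0 : 0 < α) (hαρ : α < ρ) (hαρstar : α < (ρ - ρstar) / (1 - ρstar))
    (hβ0 : 0 < β) (hβ : β < α * ρ)
    (J : ℕ → Finset ι) (g : ℕ → ι → ℝ)
    (hcard : ∀ n : ℕ, 2 ≤ n → ((J n).card : ℝ) ≤ (n : ℝ) ^ α)
    (hg0 : ∀ n : ℕ, 2 ≤ n → ∀ j ∈ J n, 0 ≤ g n j)
    (hgρ : ∀ n : ℕ, 2 ≤ n → ∀ j ∈ J n, g n j ≤ ρ)
    (hbig : ∀ n : ℕ, 2 ≤ n →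
      (((J n).filter (fun j => ρstar < g n j)).card : ℝ) ≤ (n : ℝ) ^ β)
    (f : ℕ → ℝ)
    (hf : ∀ n : ℕ, 2 ≤ n →
      f n = (n : ℝ) ^ α + (∑ j ∈ J n, (n : ℝ) ^ ((1 - α) * g n j)) * Real.log n) :
    Tendsto (fun n : ℕ => f n / ((n : ℝ) ^ ρ * Real.log n)) atTop (nhds 0) :=
  rangeLSH_beats_simpleLSH_general ρ ρstar α β hρstarρ hρ1 hαρ hαρstar hβ J g hcard hgρ hbig f hf
end

section
/- Fix r > 0 and define F_r(d) = 1 − 2Φ(−r/d) − (2d/(√(2π)·r))·(1 − exp(−(r/d)²/2)) for d > 0, where Φ(x) = ∫_{−∞}^{x} (1/√(2π))·exp(−t²/2) dt is the standard normal cumulative distribution function. Then F_r is strictly decreasing on (0, ∞), and 0 < F_r(d) < 1 for every d > 0. -/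
open MeasureTheory

/-- The standard normal cumulative distribution function. -/
noncomputable def Phi (x : ℝ) : ℝ :=
  ∫ t in Set.Iic x, (1 / Real.sqrt (2 * Real.pi)) * Real.exp (-t ^ 2 / 2)

/-- The collision probability of the L2 LSH `h(x) = ⌊(aᵀx + b)/r⌋` at distance `d`. -/
noncomputable def Fcol (r d : ℝ) : ℝ :=
  1 - 2 * Phi (-r / d) - (2 * d / (Real.sqrt (2 * Real.pi) * r)) *
    (1 - Real.exp (-(r / d) ^ 2 / 2))

/-!
With `s = r / d`, differentiating in `d` the two terms involving `exp (-s ^ 2 / 2)` cancel and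
`F_r'(d) = -(2 / (√(2π) r)) (1 - exp (-s ^ 2 / 2)) < 0`. Since the standard Gaussian density `φ`
is even with total mass one, `1 - 2 Φ(-s) = 2 ∫₀ˢ φ`; together with the elementary primitive of
`t exp (-t ^ 2 / 2)` this gives `F_r(d) = 2 ∫₀ˢ (1 - t / s) φ(t) dt`, whose integrand is positive
on `(0, s)`. Finally `F_r < 1` because both subtracted terms in the definition are positive.
-/

open Real Set ProbabilityTheory

section
variable {E : Type*} [NormedAddCommGroup E] [NormedSpace ℝ E] {f : ℝ → E}

theorem hasDerivAt_integral_Iic [CompleteSpace E] (hf : Integrable f) {x : ℝ}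
    (hx : ContinuousAt f x) :
    HasDerivAt (fun y => ∫ t in Iic y, f t) (f x) x := by
  have hsplit : (fun y => ∫ t in Iic y, f t) = fun y => (∫ t in Iic 0, f t) + ∫ t in 0..y, f t :=
    funext fun y => eq_add_of_sub_eq'
      (intervalIntegral.integral_Iic_sub_Iic hf.integrableOn hf.integrableOn)
  rw [hsplit]
  exact (intervalIntegral.integral_hasDerivAt_right hf.intervalIntegrable
    hf.aestronglyMeasurable.stronglyMeasurableAtFilter hx).const_add _

theorem integral_Iic_neg_of_even (hf : Integrable f) (heven : ∀ t, f (-t) = f t) (s : ℝ) :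
    ∫ t in Iic (-s), f t = (2 : ℝ)⁻¹ • (∫ t, f t) - ∫ t in 0..s, f t := by
  have hIoi : ∫ t in Ioi 0, f t = ∫ t in Iic 0, f t := by
    simpa only [heven, neg_zero] using (integral_comp_neg_Iic 0 f).symm
  have hhalf : ∫ t, f t = (2 : ℝ) • ∫ t in Iic 0, f t := by
    rw [← intervalIntegral.integral_Iic_add_Ioi hf.integrableOn hf.integrableOn, hIoi, two_smul]
  have hsymm : ∫ t in (-s)..0, f t = ∫ t in 0..s, f t := by
    simpa only [heven, neg_zero] using (intervalIntegral.integral_comp_neg (a := 0) (b := s) f).symm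
  rw [hhalf, smul_smul, inv_mul_cancel₀ two_ne_zero, one_smul, ← hsymm,
    ← intervalIntegral.integral_Iic_sub_Iic hf.integrableOn hf.integrableOn, sub_sub_cancel]

end

theorem integral_mul_exp_neg_sq_div_two (a b : ℝ) :
    ∫ t in a..b, t * exp (-t ^ 2 / 2) = exp (-a ^ 2 / 2) - exp (-b ^ 2 / 2) := by
  have hderiv (t : ℝ) : HasDerivAt (fun u => -exp (-u ^ 2 / 2)) (t * exp (-t ^ 2 / 2)) t := by
    refine ((((hasDerivAt_id' t).fun_pow 2).fun_neg.div_const 2).exp.fun_neg).congr_deriv ?_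
    ring
  rw [intervalIntegral.integral_eq_sub_of_hasDerivAt (fun t _ => hderiv t)
    ((by fun_prop : Continuous fun t : ℝ => t * exp (-t ^ 2 / 2)).intervalIntegrable _ _)]
  ring

theorem exp_neg_sq_div_two_lt_one {x : ℝ} (hx : x ≠ 0) : exp (-x ^ 2 / 2) < 1 :=
  exp_lt_one_iff.2 (by linarith [sq_pos_of_ne_zero hx])

theorem gaussianPDFReal_zero_one (t : ℝ) :
    gaussianPDFReal 0 1 t = (√(2 * π))⁻¹ * exp (-t ^ 2 / 2) := by
  simp [gaussianPDFReal_def]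

theorem continuous_gaussianPDFReal (μ : ℝ) (v : NNReal) : Continuous (gaussianPDFReal μ v) := by
  rw [gaussianPDFReal_def]
  fun_prop

theorem Phi_eq_integral_gaussianPDFReal (x : ℝ) : Phi x = ∫ t in Iic x, gaussianPDFReal 0 1 t := by
  simp only [Phi, gaussianPDFReal_zero_one, one_div]

theorem hasDerivAt_Phi (x : ℝ) : HasDerivAt Phi (gaussianPDFReal 0 1 x) x := by
  rw [funext Phi_eq_integral_gaussianPDFReal]
  exact hasDerivAt_integral_Iic (integrable_gaussianPDFReal 0 1)
    (continuous_gaussianPDFReal 0 1).continuousAt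

theorem Phi_pos (x : ℝ) : 0 < Phi x := by
  rw [Phi_eq_integral_gaussianPDFReal, setIntegral_pos_iff_support_of_nonneg_ae
    (ae_of_all _ (gaussianPDFReal_nonneg 0 1)) (integrable_gaussianPDFReal 0 1).integrableOn,
    Function.support_eq_univ fun t => (gaussianPDFReal_pos 0 1 t one_ne_zero).ne']
  simp

theorem Phi_neg (s : ℝ) : Phi (-s) = 1 / 2 - ∫ t in 0..s, gaussianPDFReal 0 1 t := by
  rw [Phi_eq_integral_gaussianPDFReal, integral_Iic_neg_of_even (integrable_gaussianPDFReal 0 1)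
    (fun t => by simp only [gaussianPDFReal_zero_one, neg_sq]),
    integral_gaussianPDFReal_eq_one 0 one_ne_zero, smul_eq_mul, mul_one, one_div]

theorem Fcol_eq_integral (r d : ℝ) :
    Fcol r d = 2 * ∫ t in 0..r / d, (1 - t * d / r) * gaussianPDFReal 0 1 t := by
  have hsplit (t : ℝ) : (1 - t * d / r) * gaussianPDFReal 0 1 t =
      gaussianPDFReal 0 1 t - d / (√(2 * π) * r) * (t * exp (-t ^ 2 / 2)) := by
    rw [gaussianPDFReal_zero_one]; ring
  have hint : IntervalIntegrable (fun t => t * exp (-t ^ 2 / 2)) volume 0 (r / d) :=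
    (by fun_prop : Continuous fun t : ℝ => t * exp (-t ^ 2 / 2)).intervalIntegrable _ _
  simp_rw [hsplit]
  rw [intervalIntegral.integral_sub (integrable_gaussianPDFReal 0 1).intervalIntegrable
      (hint.const_mul _), intervalIntegral.integral_const_mul, integral_mul_exp_neg_sq_div_two,
    Fcol, neg_div, Phi_neg, zero_pow two_ne_zero, neg_zero, zero_div, exp_zero]
  ring

theorem hasDerivAt_Fcol {r d : ℝ} (hr : r ≠ 0) (hd : d ≠ 0) :
    HasDerivAt (Fcol r) (-(2 / (√(2 * π) * r)) * (1 - exp (-(r / d) ^ 2 / 2))) d := by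
  have hdiv (c : ℝ) := (hasDerivAt_const d c).fun_div (hasDerivAt_id' d) hd
  have hPhi := (hasDerivAt_Phi _).comp d (hdiv (-r))
  have hexp := (((hdiv r).fun_pow 2).fun_neg.div_const 2).exp
  have hlin := ((hasDerivAt_id' d).const_mul 2).div_const (√(2 * π) * r)
  refine (((hPhi.const_mul 2).const_sub 1).fun_sub (hlin.fun_mul (hexp.const_sub 1))).congr_deriv ?_
  rw [gaussianPDFReal_zero_one, neg_div d r, neg_sq]
  generalize exp (-(r / d) ^ 2 / 2) = E
  norm_num only [Nat.cast_ofNat]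
  field_simp
  ring

theorem strictAntiOn_Fcol {r : ℝ} (hr : 0 < r) : StrictAntiOn (Fcol r) (Ioi 0) := by
  have hderiv {d : ℝ} (hd : d ∈ Ioi 0) := hasDerivAt_Fcol hr.ne' (ne_of_gt hd)
  refine strictAntiOn_of_hasDerivWithinAt_neg (convex_Ioi 0)
    (fun d hd => (hderiv hd).continuousAt.continuousWithinAt)
    (fun d hd => (hderiv (interior_subset hd)).hasDerivWithinAt) fun d hd => ?_
  rw [interior_Ioi] at hd
  exact mul_neg_of_neg_of_pos (neg_neg_of_pos (by positivity))
    (sub_pos.2 (exp_neg_sq_div_two_lt_one (div_pos hr hd).ne'))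

theorem Fcol_pos {r d : ℝ} (hr : 0 < r) (hd : 0 < d) : 0 < Fcol r d := by
  rw [Fcol_eq_integral]
  refine mul_pos two_pos (intervalIntegral.intervalIntegral_pos_of_pos_on ?_ (fun t ht => ?_)
    (div_pos hr hd))
  · exact ((by fun_prop : Continuous fun t : ℝ => 1 - t * d / r).mul
      (continuous_gaussianPDFReal 0 1)).intervalIntegrable _ _
  · have htd : t * d < r := (lt_div_iff₀ hd).1 ht.2
    exact mul_pos (sub_pos.2 ((div_lt_one hr).2 htd)) (gaussianPDFReal_pos 0 1 t one_ne_zero)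

theorem Fcol_lt_one {r d : ℝ} (hr : 0 < r) (hd : 0 < d) : Fcol r d < 1 := by
  have hPhi := Phi_pos (-r / d)
  have hsub : 0 < 2 * d / (√(2 * π) * r) * (1 - exp (-(r / d) ^ 2 / 2)) :=
    mul_pos (by positivity) (sub_pos.2 (exp_neg_sq_div_two_lt_one (div_pos hr hd).ne'))
  rw [Fcol]
  linarith

/-- For fixed `r > 0`, the collision probability `F_r` is strictly decreasing on `(0, ∞)`
and takes values in `(0, 1)` there. -/
theorem Fcol_strictAnti_and_mem_Ioo (r : ℝ) (hr : 0 < r) :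
    StrictAntiOn (Fcol r) (Set.Ioi 0) ∧ ∀ d : ℝ, 0 < d → 0 < Fcol r d ∧ Fcol r d < 1 :=
  ⟨strictAntiOn_Fcol hr, fun _ hd => ⟨Fcol_pos hr hd, Fcol_lt_one hr hd⟩⟩
end
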